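/- Let $\bar\Phi \in L^2(0,T;\mathbb{R}^n)$, $\bar{u} \in \mathcal{U}_{\rm ad}$, and suppose $v \in C(\bar u)$ (the critical cone). For each positive integer $k$ define $v_{k,i}(t) = 0$ if $u_i^{\min}(t) < \bar u_i(t) < u_i^{\min}(t) + 1/k$ or $u_i^{\max}(t) - 1/k < \bar u_i(t) < u_i^{\max}(t)$, and $v_{k,i}(t) = \mathbb{P}_{[-k,k]}(v_i(t))$ otherwise. Then: (i) $\bar u + k^{-2} v_k \in \mathcal{U}_{\rm ad}$ for every $k$; (ii) $v_k \to v$ strongly in $L^2(0,T;\mathbb{R}^n)$; (iii) $|v_{k,i}(t)| \le |v_i(t)|$ a.e. for each $i$, so $\sum_i \int_0^T \bar\Phi_i v_{k,i}\,dt = 0$ whenever $\sum_i \int_0^T |\bar\Phi_i v_i|\,dt = 0$. In particular, $C(\bar u)$ equals the $L^2$-closure of $D(\bar u) = \{v \in S(\bar u) : \sum_i\int_0^T \bar\Phi_i v_i\,dt = 0\}$. -/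

import Mathlib

/-!
The truncation `v_k` vanishes in a boundary layer of width `1/k` of the bounds and is bounded
by `k` elsewhere, so a step `k⁻² v_k` cannot leave `[umin, umax]`; since `v_k → v` pointwise with
`|v_k| ≤ |v|`, dominated convergence gives `v_k → v` in `L²`.

For `C(ū) = cl D(ū)`: an `L²` limit of feasible directions has an a.e. convergent subsequence,
so it keeps the pointwise sign conditions of the tangent cone of `[umin, umax]` at `ū`. Combined
with the sign conditions on `Φ` this makes every `Φᵢ vᵢ` nonnegative, so `∑ᵢ ∫ Φᵢ vᵢ = 0` forces
`Φᵢ vᵢ = 0` a.e., and then the truncations `v_k` lie in `D(ū)`. Conversely, the pairing with `Φ`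
is `L²`-continuous by Cauchy–Schwarz.
-/

open MeasureTheory Filter

/-- The admissible set `U_ad = {u : umin ≤ u ≤ umax a.e.}` (measurable representatives). -/
def Uad (n : ℕ) (T : ℝ) (umin umax : ℝ → Fin n → ℝ) (u : ℝ → Fin n → ℝ) : Prop :=
  Measurable u ∧
    ∀ᵐ t ∂(volume.restrict (Set.Ioo 0 T)), ∀ i, umin t i ≤ u t i ∧ u t i ≤ umax t i

/-- The cone of feasible directions `S(ū) = {λ(u - ū) : λ > 0, u ∈ U_ad}`. -/
def feasCone (n : ℕ) (T : ℝ) (umin umax ubar : ℝ → Fin n → ℝ) (v : ℝ → Fin n → ℝ) : Prop :=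
  ∃ lam : ℝ, 0 < lam ∧ ∃ u : ℝ → Fin n → ℝ, Uad n T umin umax u ∧
    ∀ᵐ t ∂(volume.restrict (Set.Ioo 0 T)), ∀ i, v t i = lam * (u t i - ubar t i)

/-- `D(ū) = {v ∈ S(ū) : ∑ᵢ ∫ Φᵢ vᵢ dt = 0}`. -/
def Dcone (n : ℕ) (T : ℝ) (umin umax ubar Φ : ℝ → Fin n → ℝ) (v : ℝ → Fin n → ℝ) : Prop :=
  feasCone n T umin umax ubar v ∧ ∑ i, ∫ t in Set.Ioo 0 T, Φ t i * v t i = 0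

/-- Membership in the `L²`-closure of `S(ū)`, sequentially. -/
def inClosureS (n : ℕ) (T : ℝ) (umin umax ubar : ℝ → Fin n → ℝ)
    (v : ℝ → Fin n → ℝ) : Prop :=
  ∃ vk : ℕ → ℝ → Fin n → ℝ, (∀ k, feasCone n T umin umax ubar (vk k)) ∧
    Tendsto (fun k => ∫ t in Set.Ioo 0 T, ∑ i, (vk k t i - v t i) ^ 2) atTop (nhds 0)

/-- Membership in the `L²`-closure of `D(ū)`, sequentially. -/
def inClosureD (n : ℕ) (T : ℝ) (umin umax ubar Φ : ℝ → Fin n → ℝ)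
    (v : ℝ → Fin n → ℝ) : Prop :=
  ∃ vk : ℕ → ℝ → Fin n → ℝ, (∀ k, Dcone n T umin umax ubar Φ (vk k)) ∧
    Tendsto (fun k => ∫ t in Set.Ioo 0 T, ∑ i, (vk k t i - v t i) ^ 2) atTop (nhds 0)

/-- The critical cone `C(ū) = cl_{L²}(S(ū)) ∩ {v : ∑ᵢ ∫ Φᵢ vᵢ = 0}`. -/
def critCone (n : ℕ) (T : ℝ) (umin umax ubar Φ : ℝ → Fin n → ℝ)
    (v : ℝ → Fin n → ℝ) : Prop :=
  inClosureS n T umin umax ubar v ∧ ∑ i, ∫ t in Set.Ioo 0 T, Φ t i * v t i = 0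

/-- The truncation `v_k` used in the critical cone arguments. -/
noncomputable def trunc (n : ℕ) (umin umax ubar v : ℝ → Fin n → ℝ) (k : ℕ)
    (t : ℝ) (i : Fin n) : ℝ :=
  if (umin t i < ubar t i ∧ ubar t i < umin t i + 1 / (k : ℝ)) ∨
      (umax t i - 1 / (k : ℝ) < ubar t i ∧ ubar t i < umax t i) then 0
  else max (-(k : ℝ)) (min (k : ℝ) (v t i))

section L2

variable {α : Type*} [MeasurableSpace α] {μ : Measure α}

theorem MeasureTheory.MemLp.eLpNorm_two_eq_sqrt_integral_sq {f : α → ℝ} (hf : MemLp f 2 μ) :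
    eLpNorm f 2 μ = ENNReal.ofReal √(∫ x, f x ^ 2 ∂μ) := by
  rw [hf.eLpNorm_eq_integral_rpow_norm two_ne_zero ENNReal.ofNat_ne_top, Real.sqrt_eq_rpow]
  norm_num [Real.norm_eq_abs]

theorem abs_integral_mul_le_sqrt_mul_sqrt {f g : α → ℝ} (hf : MemLp f 2 μ) (hg : MemLp g 2 μ) :
    |∫ x, f x * g x ∂μ| ≤ √(∫ x, f x ^ 2 ∂μ) * √(∫ x, g x ^ 2 ∂μ) := by
  have holder := integral_mul_norm_le_Lp_mul_Lq (f := f) (g := g) Real.HolderConjugate.two_two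
    (by rwa [ENNReal.ofReal_ofNat]) (by rwa [ENNReal.ofReal_ofNat])
  simp only [Real.norm_eq_abs, ← abs_mul, Real.rpow_two, sq_abs, ← Real.sqrt_eq_rpow] at holder
  exact (abs_integral_le_integral_abs).trans holder

theorem tendsto_integral_mul_of_tendsto_integral_sq {ι : Type*} {l : Filter ι} {f : α → ℝ}
    {g : ι → α → ℝ} (hf : MemLp f 2 μ) (hg : ∀ k, MemLp (g k) 2 μ)
    (hlim : Tendsto (fun k => ∫ x, g k x ^ 2 ∂μ) l (nhds 0)) :
    Tendsto (fun k => ∫ x, f x * g k x ∂μ) l (nhds 0) := by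
  have hbound : Tendsto (fun k => √(∫ x, f x ^ 2 ∂μ) * √(∫ x, g k x ^ 2 ∂μ)) l (nhds 0) := by
    simpa using hlim.sqrt.const_mul √(∫ x, f x ^ 2 ∂μ)
  exact squeeze_zero_norm (fun k => abs_integral_mul_le_sqrt_mul_sqrt hf (hg k)) hbound

theorem ae_mem_of_tendsto_integral_sq_sub {g : ℕ → α → ℝ} {f : α → ℝ} {C : α → Set ℝ}
    (hC : ∀ x, IsClosed (C x)) (hg : ∀ k, MemLp (g k) 2 μ) (hf : MemLp f 2 μ)
    (hgC : ∀ k, ∀ᵐ x ∂μ, g k x ∈ C x)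
    (hlim : Tendsto (fun k => ∫ x, (g k x - f x) ^ 2 ∂μ) atTop (nhds 0)) :
    ∀ᵐ x ∂μ, f x ∈ C x := by
  have hLp : Tendsto (fun k => eLpNorm (g k - f) 2 μ) atTop (nhds 0) := by
    have hnorm (k : ℕ) := ((hg k).sub hf).eLpNorm_two_eq_sqrt_integral_sq
    simp only [Pi.sub_apply] at hnorm
    simpa [hnorm] using ENNReal.tendsto_ofReal hlim.sqrt
  obtain ⟨ns, -, hae⟩ := (tendstoInMeasure_of_tendsto_eLpNorm two_ne_zero
    (fun k => (hg k).1) hf.1 hLp).exists_seq_tendsto_ae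
  filter_upwards [hae, ae_all_iff.2 hgC] with x hx hxC
  exact (hC x).mem_of_tendsto hx (Eventually.of_forall fun k => hxC (ns k))

theorem ae_eq_zero_of_sum_integral_eq_zero {ι : Type*} [Fintype ι] {f : ι → α → ℝ}
    (hf : ∀ i, Integrable (f i) μ) (hf0 : ∀ i, 0 ≤ᵐ[μ] f i) (hsum : ∑ i, ∫ x, f i x ∂μ = 0) :
    ∀ᵐ x ∂μ, ∀ i, f i x = 0 := by
  have hzero := (Finset.sum_eq_zero_iff_of_nonneg fun i _ => integral_nonneg_of_ae (hf0 i)).1 hsum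
  exact ae_all_iff.2 fun i => (integral_eq_zero_iff_of_nonneg_ae (hf0 i) (hf i)).1
    (hzero i (Finset.mem_univ i))

theorem tendsto_integral_sq_of_tendsto_integral_sum_sq {ι κ : Type*} [Fintype ι] {l : Filter κ}
    {g : κ → α → ι → ℝ} (hg : ∀ k i, MemLp (fun x => g k x i) 2 μ)
    (hlim : Tendsto (fun k => ∫ x, ∑ i, g k x i ^ 2 ∂μ) l (nhds 0)) (i : ι) :
    Tendsto (fun k => ∫ x, g k x i ^ 2 ∂μ) l (nhds 0) := by
  refine squeeze_zero (fun k => integral_nonneg fun x => sq_nonneg _) (fun k => ?_) hlim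
  refine integral_mono (hg k i).integrable_sq
    (integrable_finsetSum _ fun j _ => (hg k j).integrable_sq) fun x => ?_
  exact Finset.single_le_sum (f := fun j => g k x j ^ 2) (fun j _ => sq_nonneg _)
    (Finset.mem_univ i)

theorem sum_integral_mul_eq_zero_of_tendsto {ι κ : Type*} [Fintype ι] {l : Filter κ} [l.NeBot]
    {Φ v : α → ι → ℝ} {w : κ → α → ι → ℝ} (hΦ : ∀ i, MemLp (fun x => Φ x i) 2 μ)
    (hw : ∀ k i, MemLp (fun x => w k x i) 2 μ) (hv : ∀ i, MemLp (fun x => v x i) 2 μ)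
    (hw0 : ∀ k, ∑ i, ∫ x, Φ x i * w k x i ∂μ = 0)
    (hlim : Tendsto (fun k => ∫ x, ∑ i, (w k x i - v x i) ^ 2 ∂μ) l (nhds 0)) :
    ∑ i, ∫ x, Φ x i * v x i ∂μ = 0 := by
  have hsub (k : κ) (i : ι) : MemLp (fun x => w k x i - v x i) 2 μ := (hw k i).sub (hv i)
  have hpair (i : ι) : Tendsto (fun k => ∫ x, Φ x i * (w k x i - v x i) ∂μ) l (nhds 0) :=
    tendsto_integral_mul_of_tendsto_integral_sq (hΦ i) (fun k => hsub k i)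
      (tendsto_integral_sq_of_tendsto_integral_sum_sq hsub hlim i)
  have hconst (k : κ) :
      ∑ i, ∫ x, Φ x i * (w k x i - v x i) ∂μ = -∑ i, ∫ x, Φ x i * v x i ∂μ := by
    have hint (g : α → ι → ℝ) (hg : ∀ i, MemLp (fun x => g x i) 2 μ) (i : ι) :
        Integrable (fun x => Φ x i * g x i) μ := (hΦ i).integrable_mul (hg i)
    rw [← zero_sub, ← hw0 k, ← Finset.sum_sub_distrib]
    refine Finset.sum_congr rfl fun i _ => ?_
    simp_rw [mul_sub]
    exact integral_sub (hint _ (hw k) i) (hint v hv i)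
  have := tendsto_finsetSum Finset.univ fun i _ => hpair i
  simp only [hconst, Finset.sum_const_zero] at this
  exact neg_eq_zero.1 (tendsto_nhds_unique tendsto_const_nhds this)

end L2

section TangentCone

def tangentConeIcc (a b c : ℝ) : Set ℝ := {y | (c = a → 0 ≤ y) ∧ (c = b → y ≤ 0)}

theorem isClosed_tangentConeIcc (a b c : ℝ) : IsClosed (tangentConeIcc a b c) := by
  refine IsClosed.inter (s₁ := {y : ℝ | c = a → 0 ≤ y}) ?_ ?_
  · by_cases h : c = a
    · simp only [h, forall_const]; exact isClosed_Ici
    · simp only [h, false_implies]; exact isClosed_univ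
  · by_cases h : c = b
    · simp only [h, forall_const]; exact isClosed_Iic
    · simp only [h, false_implies]; exact isClosed_univ

theorem mul_sub_mem_tangentConeIcc {a b c u lam : ℝ} (hlam : 0 ≤ lam) (hu : u ∈ Set.Icc a b) :
    lam * (u - c) ∈ tangentConeIcc a b c :=
  ⟨fun h => mul_nonneg hlam (by linarith [hu.1]),
    fun h => mul_nonpos_of_nonneg_of_nonpos hlam (by linarith [hu.2])⟩

theorem mul_nonneg_of_mem_tangentConeIcc {a b c φ y : ℝ}
    (hφ : (0 < φ → c = a) ∧ (φ < 0 → c = b)) (hy : y ∈ tangentConeIcc a b c) : 0 ≤ φ * y := by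
  rcases lt_trichotomy φ 0 with h | h | h
  · exact mul_nonneg_of_nonpos_of_nonpos h.le (hy.2 (hφ.2 h))
  · simp [h]
  · exact mul_nonneg h.le (hy.1 (hφ.1 h))

end TangentCone

section Truncation

variable {n : ℕ} (umin umax ubar v : ℝ → Fin n → ℝ)

theorem abs_trunc_le (k : ℕ) (t : ℝ) (i : Fin n) :
    |trunc n umin umax ubar v k t i| ≤ |v t i| := by
  unfold trunc
  split_ifs
  · simp
  · rw [abs_le]
    constructor
    · exact (le_min (by linarith [neg_abs_le (v t i), abs_nonneg (v t i)]) (neg_abs_le _)).trans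
        (le_max_right _ _)
    · exact max_le (by linarith [abs_nonneg (v t i), Nat.cast_nonneg (α := ℝ) k])
        ((min_le_right _ _).trans (le_abs_self _))

theorem eventually_trunc_eq (t : ℝ) (i : Fin n) :
    ∀ᶠ k : ℕ in atTop, trunc n umin umax ubar v k t i = v t i := by
  have hlo : ∀ᶠ k : ℕ in atTop, ¬(umin t i < ubar t i ∧ ubar t i < umin t i + 1 / (k : ℝ)) := by
    by_cases h : umin t i < ubar t i
    · filter_upwards [tendsto_one_div_atTop_nhds_zero_nat.eventually_lt_const (sub_pos.2 h)]
        with k hk hc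
      linarith [hc.2]
    · exact Eventually.of_forall fun k hc => h hc.1
  have hhi : ∀ᶠ k : ℕ in atTop, ¬(umax t i - 1 / (k : ℝ) < ubar t i ∧ ubar t i < umax t i) := by
    by_cases h : ubar t i < umax t i
    · filter_upwards [tendsto_one_div_atTop_nhds_zero_nat.eventually_lt_const (sub_pos.2 h)]
        with k hk hc
      linarith [hc.1]
    · exact Eventually.of_forall fun k hc => h hc.2
  filter_upwards [hlo, hhi, tendsto_natCast_atTop_atTop.eventually_ge_atTop |v t i|]
    with k hk_lo hk_hi hk
  rw [trunc, if_neg (not_or.2 ⟨hk_lo, hk_hi⟩), min_eq_right ((le_abs_self _).trans hk),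
    max_eq_right (by linarith [neg_abs_le (v t i)])]

variable {umin umax ubar v}

theorem measurable_trunc (hmin : Measurable umin) (hmax : Measurable umax)
    (hubar : Measurable ubar) (hv : Measurable v) (k : ℕ) (i : Fin n) :
    Measurable fun t => trunc n umin umax ubar v k t i := by
  have hmin_i := measurable_pi_iff.1 hmin i
  have hmax_i := measurable_pi_iff.1 hmax i
  have hubar_i := measurable_pi_iff.1 hubar i
  have hv_i := measurable_pi_iff.1 hv i
  refine Measurable.ite ?_ measurable_const (measurable_const.max (measurable_const.min hv_i))
  exact ((measurableSet_lt hmin_i hubar_i).inter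
    (measurableSet_lt hubar_i (hmin_i.add_const _))).union
    ((measurableSet_lt (hmax_i.sub_const _) hubar_i).inter (measurableSet_lt hubar_i hmax_i))

theorem add_trunc_mem_Icc {k : ℕ} (hk : 1 ≤ k) {t : ℝ} {i : Fin n}
    (hu : ubar t i ∈ Set.Icc (umin t i) (umax t i))
    (hv : v t i ∈ tangentConeIcc (umin t i) (umax t i) (ubar t i)) :
    ubar t i + ((k : ℝ) ^ 2)⁻¹ * trunc n umin umax ubar v k t i ∈
      Set.Icc (umin t i) (umax t i) := by
  obtain ⟨hlo, hhi⟩ := hu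
  unfold trunc
  split_ifs with hlayer
  · simpa using ⟨hlo, hhi⟩
  simp only [not_or, not_and, not_lt] at hlayer
  obtain ⟨hfar_lo, hfar_hi⟩ := hlayer
  have hk0 : (0 : ℝ) < k := by exact_mod_cast hk
  set w := max (-(k : ℝ)) (min (k : ℝ) (v t i))
  -- the step `k⁻² w` has size at most `1/k` and the sign of `v`
  have hstep : |((k : ℝ) ^ 2)⁻¹ * w| ≤ 1 / k := by
    have hw : |w| ≤ k := abs_le.2 ⟨le_max_left _ _, max_le (by linarith) (min_le_left _ _)⟩
    rw [abs_mul, abs_of_pos (by positivity)]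
    calc ((k : ℝ) ^ 2)⁻¹ * |w| ≤ ((k : ℝ) ^ 2)⁻¹ * k := by gcongr
      _ = 1 / k := by field_simp
  have hpos : 0 ≤ v t i → 0 ≤ ((k : ℝ) ^ 2)⁻¹ * w := fun h =>
    mul_nonneg (by positivity) ((le_min hk0.le h).trans (le_max_right _ _))
  have hneg : v t i ≤ 0 → ((k : ℝ) ^ 2)⁻¹ * w ≤ 0 := fun h =>
    mul_nonpos_of_nonneg_of_nonpos (by positivity)
      (max_le (by linarith) ((min_le_right _ _).trans h))
  obtain ⟨hstep_lo, hstep_hi⟩ := abs_le.1 hstep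
  constructor
  · rcases hlo.eq_or_lt with h | h
    · linarith [hpos (hv.1 h.symm)]
    · linarith [hfar_lo h]
  · rcases hhi.eq_or_lt with h | h
    · linarith [hneg (hv.2 h)]
    · linarith [not_lt.1 (mt hfar_hi (not_le.2 h))]

theorem uad_add_trunc {T : ℝ} (hmin : Measurable umin) (hmax : Measurable umax)
    (hv : Measurable v) (hubar : Uad n T umin umax ubar)
    (hvtan : ∀ᵐ t ∂(volume.restrict (Set.Ioo 0 T)), ∀ i,
      v t i ∈ tangentConeIcc (umin t i) (umax t i) (ubar t i))
    {k : ℕ} (hk : 1 ≤ k) :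
    Uad n T umin umax fun t i => ubar t i + ((k : ℝ) ^ 2)⁻¹ * trunc n umin umax ubar v k t i := by
  refine ⟨measurable_pi_lambda _ fun i => (measurable_pi_iff.1 hubar.1 i).add
    (measurable_const.mul (measurable_trunc hmin hmax hubar.1 hv k i)), ?_⟩
  filter_upwards [hubar.2, hvtan] with t hu hvt i
  exact add_trunc_mem_Icc hk (hu i) (hvt i)

theorem tendsto_integral_trunc_sub_sq {μ : Measure ℝ} (hmin : Measurable umin)
    (hmax : Measurable umax) (hubar : Measurable ubar) (hv : Measurable v)
    (hvL2 : ∀ i, MemLp (fun t => v t i) 2 μ) :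
    Tendsto (fun k : ℕ => ∫ t, ∑ i, (trunc n umin umax ubar v k t i - v t i) ^ 2 ∂μ)
      atTop (nhds 0) := by
  have hdom (k : ℕ) (t : ℝ) (i : Fin n) :
      (trunc n umin umax ubar v k t i - v t i) ^ 2 ≤ 4 * v t i ^ 2 := by
    calc (trunc n umin umax ubar v k t i - v t i) ^ 2
        = |trunc n umin umax ubar v k t i - v t i| ^ 2 := (sq_abs _).symm
      _ ≤ (2 * |v t i|) ^ 2 := by
        gcongr
        linarith [abs_sub (trunc n umin umax ubar v k t i) (v t i),
          abs_trunc_le umin umax ubar v k t i]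
      _ = 4 * v t i ^ 2 := by rw [mul_pow, sq_abs]; norm_num
  have hlim (t : ℝ) :
      Tendsto (fun k : ℕ => ∑ i, (trunc n umin umax ubar v k t i - v t i) ^ 2) atTop (nhds 0) := by
    refine tendsto_const_nhds.congr' ?_
    filter_upwards [eventually_all.2 fun i => eventually_trunc_eq umin umax ubar v t i] with k hk
    simp [hk]
  simpa using tendsto_integral_of_dominated_convergence (fun t => ∑ i, 4 * v t i ^ 2)
    (fun k => (Finset.measurable_sum _ fun i _ => ((measurable_trunc hmin hmax hubar hv k i).sub
      (measurable_pi_iff.1 hv i)).pow_const 2).aestronglyMeasurable)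
    (integrable_finsetSum _ fun i _ => (hvL2 i).integrable_sq.const_mul 4)
    (fun k => ae_of_all _ fun t => by
      rw [Real.norm_of_nonneg (Finset.sum_nonneg fun i _ => sq_nonneg _)]
      exact Finset.sum_le_sum fun i _ => hdom k t i)
    (ae_of_all _ hlim)

theorem sum_integral_mul_trunc_eq_zero {μ : Measure ℝ} {Φ : ℝ → Fin n → ℝ}
    (hΦv : ∀ᵐ t ∂μ, ∀ i, Φ t i * v t i = 0) (k : ℕ) :
    ∑ i, ∫ t, Φ t i * trunc n umin umax ubar v k t i ∂μ = 0 := by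
  refine Finset.sum_eq_zero fun i _ => integral_eq_zero_of_ae ?_
  filter_upwards [hΦv] with t ht
  rcases mul_eq_zero.1 (ht i) with h | h
  · simp [h]
  · have htrunc := abs_trunc_le umin umax ubar v k t i
    rw [h, abs_zero, abs_nonpos_iff] at htrunc
    simp [htrunc]

end Truncation

section CriticalCone

variable {n : ℕ} {T : ℝ} {umin umax ubar : ℝ → Fin n → ℝ}

theorem feasCone_of_uad_add {c : ℝ} (hc : 0 < c) {w : ℝ → Fin n → ℝ}
    (h : Uad n T umin umax fun t i => ubar t i + c⁻¹ * w t i) :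
    feasCone n T umin umax ubar w :=
  ⟨c, hc, _, h, ae_of_all _ fun t i => by field_simp; ring⟩

theorem feasCone.ae_mem_tangentConeIcc {w : ℝ → Fin n → ℝ}
    (hw : feasCone n T umin umax ubar w) :
    ∀ᵐ t ∂(volume.restrict (Set.Ioo 0 T)), ∀ i,
      w t i ∈ tangentConeIcc (umin t i) (umax t i) (ubar t i) := by
  obtain ⟨lam, hlam, u, hu, hwu⟩ := hw
  filter_upwards [hu.2, hwu] with t hut hwt i
  rw [hwt i]
  exact mul_sub_mem_tangentConeIcc hlam.le (hut i)

theorem feasCone.memLp {Cbound : ℝ}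
    (hminbdd : ∀ᵐ t ∂(volume.restrict (Set.Ioo 0 T)), ∀ i, |umin t i| ≤ Cbound)
    (hmaxbdd : ∀ᵐ t ∂(volume.restrict (Set.Ioo 0 T)), ∀ i, |umax t i| ≤ Cbound)
    (hubar : Uad n T umin umax ubar) {w : ℝ → Fin n → ℝ}
    (hw : feasCone n T umin umax ubar w) (i : Fin n) :
    MemLp (fun t => w t i) 2 (volume.restrict (Set.Ioo 0 T)) := by
  obtain ⟨lam, hlam, u, hu, hwu⟩ := hw
  have hmeas : AEStronglyMeasurable (fun t => lam * (u t i - ubar t i))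
      (volume.restrict (Set.Ioo 0 T)) :=
    (measurable_const.mul ((measurable_pi_iff.1 hu.1 i).sub
      (measurable_pi_iff.1 hubar.1 i))).aestronglyMeasurable
  refine (MemLp.of_bound hmeas (lam * (2 * Cbound)) ?_).ae_eq
    (by filter_upwards [hwu] with t h using (h i).symm)
  filter_upwards [hu.2, hubar.2, hminbdd, hmaxbdd] with t hut hbt hmin hmax
  rw [Real.norm_eq_abs, abs_mul, abs_of_pos hlam]
  gcongr
  obtain ⟨hu_lo, hu_hi⟩ := hut i
  obtain ⟨hb_lo, hb_hi⟩ := hbt i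
  obtain ⟨hmin_lo, -⟩ := abs_le.1 (hmin i)
  obtain ⟨-, hmax_hi⟩ := abs_le.1 (hmax i)
  exact abs_le.2 ⟨by linarith, by linarith⟩

theorem inClosureS.ae_mem_tangentConeIcc {Cbound : ℝ}
    (hminbdd : ∀ᵐ t ∂(volume.restrict (Set.Ioo 0 T)), ∀ i, |umin t i| ≤ Cbound)
    (hmaxbdd : ∀ᵐ t ∂(volume.restrict (Set.Ioo 0 T)), ∀ i, |umax t i| ≤ Cbound)
    (hubar : Uad n T umin umax ubar) {v : ℝ → Fin n → ℝ}
    (hv : ∀ i, MemLp (fun t => v t i) 2 (volume.restrict (Set.Ioo 0 T)))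
    (h : inClosureS n T umin umax ubar v) :
    ∀ᵐ t ∂(volume.restrict (Set.Ioo 0 T)), ∀ i,
      v t i ∈ tangentConeIcc (umin t i) (umax t i) (ubar t i) := by
  obtain ⟨w, hw, hlim⟩ := h
  have hwL2 (k : ℕ) (i : Fin n) := (hw k).memLp hminbdd hmaxbdd hubar i
  exact ae_all_iff.2 fun i => ae_mem_of_tendsto_integral_sq_sub
    (fun t => isClosed_tangentConeIcc _ _ _) (fun k => hwL2 k i) (hv i)
    (fun k => (hw k).ae_mem_tangentConeIcc.mono fun t ht => ht i)
    (tendsto_integral_sq_of_tendsto_integral_sum_sq (fun k i => (hwL2 k i).sub (hv i)) hlim i)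

theorem critCone.ae_mul_eq_zero {Cbound : ℝ}
    (hminbdd : ∀ᵐ t ∂(volume.restrict (Set.Ioo 0 T)), ∀ i, |umin t i| ≤ Cbound)
    (hmaxbdd : ∀ᵐ t ∂(volume.restrict (Set.Ioo 0 T)), ∀ i, |umax t i| ≤ Cbound)
    (hubar : Uad n T umin umax ubar) {Φ v : ℝ → Fin n → ℝ}
    (hsign : ∀ᵐ t ∂(volume.restrict (Set.Ioo 0 T)), ∀ i,
      (0 < Φ t i → ubar t i = umin t i) ∧ (Φ t i < 0 → ubar t i = umax t i))
    (hΦ : ∀ i, MemLp (fun t => Φ t i) 2 (volume.restrict (Set.Ioo 0 T)))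
    (hv : ∀ i, MemLp (fun t => v t i) 2 (volume.restrict (Set.Ioo 0 T)))
    (h : critCone n T umin umax ubar Φ v) :
    ∀ᵐ t ∂(volume.restrict (Set.Ioo 0 T)), ∀ i, Φ t i * v t i = 0 := by
  have htan := h.1.ae_mem_tangentConeIcc hminbdd hmaxbdd hubar hv
  refine ae_eq_zero_of_sum_integral_eq_zero (f := fun i t => Φ t i * v t i)
    (fun i => (hΦ i).integrable_mul (hv i)) (fun i => ?_) h.2
  filter_upwards [hsign, htan] with t hs ht using mul_nonneg_of_mem_tangentConeIcc (hs i) (ht i)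

theorem critCone.inClosureD {Cbound : ℝ} (hmin : Measurable umin) (hmax : Measurable umax)
    (hminbdd : ∀ᵐ t ∂(volume.restrict (Set.Ioo 0 T)), ∀ i, |umin t i| ≤ Cbound)
    (hmaxbdd : ∀ᵐ t ∂(volume.restrict (Set.Ioo 0 T)), ∀ i, |umax t i| ≤ Cbound)
    (hubar : Uad n T umin umax ubar) {Φ v : ℝ → Fin n → ℝ}
    (hsign : ∀ᵐ t ∂(volume.restrict (Set.Ioo 0 T)), ∀ i,
      (0 < Φ t i → ubar t i = umin t i) ∧ (Φ t i < 0 → ubar t i = umax t i))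
    (hΦ : ∀ i, MemLp (fun t => Φ t i) 2 (volume.restrict (Set.Ioo 0 T)))
    (hvmeas : Measurable v) (hv : ∀ i, MemLp (fun t => v t i) 2 (volume.restrict (Set.Ioo 0 T)))
    (h : critCone n T umin umax ubar Φ v) :
    inClosureD n T umin umax ubar Φ v := by
  have htan := h.1.ae_mem_tangentConeIcc hminbdd hmaxbdd hubar hv
  have hΦv := h.ae_mul_eq_zero hminbdd hmaxbdd hubar hsign hΦ hv
  refine ⟨fun k => trunc n umin umax ubar v (k + 1),
    fun k => ⟨?_, sum_integral_mul_trunc_eq_zero hΦv _⟩,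
    (tendsto_integral_trunc_sub_sq hmin hmax hubar.1 hvmeas hv).comp (tendsto_add_atTop_nat 1)⟩
  exact feasCone_of_uad_add (by positivity)
    (uad_add_trunc hmin hmax hvmeas hubar htan (Nat.le_add_left 1 k))

theorem inClosureD.critCone {Cbound : ℝ}
    (hminbdd : ∀ᵐ t ∂(volume.restrict (Set.Ioo 0 T)), ∀ i, |umin t i| ≤ Cbound)
    (hmaxbdd : ∀ᵐ t ∂(volume.restrict (Set.Ioo 0 T)), ∀ i, |umax t i| ≤ Cbound)
    (hubar : Uad n T umin umax ubar) {Φ v : ℝ → Fin n → ℝ}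
    (hΦ : ∀ i, MemLp (fun t => Φ t i) 2 (volume.restrict (Set.Ioo 0 T)))
    (hv : ∀ i, MemLp (fun t => v t i) 2 (volume.restrict (Set.Ioo 0 T)))
    (h : inClosureD n T umin umax ubar Φ v) :
    critCone n T umin umax ubar Φ v := by
  obtain ⟨w, hw, hlim⟩ := h
  exact ⟨⟨w, fun k => (hw k).1, hlim⟩, sum_integral_mul_eq_zero_of_tendsto hΦ
    (fun k i => (hw k).1.memLp hminbdd hmaxbdd hubar i) hv (fun k => (hw k).2) hlim⟩

end CriticalCone

theorem stmt_12_general (n : ℕ) (T : ℝ)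
    (umin umax : ℝ → Fin n → ℝ)
    (hminmeas : Measurable umin) (hmaxmeas : Measurable umax)
    (Cbound : ℝ)
    (hminbdd : ∀ᵐ t ∂(volume.restrict (Set.Ioo 0 T)), ∀ i, |umin t i| ≤ Cbound)
    (hmaxbdd : ∀ᵐ t ∂(volume.restrict (Set.Ioo 0 T)), ∀ i, |umax t i| ≤ Cbound)
    (Φ ubar : ℝ → Fin n → ℝ)
    (hΦL2 : ∀ i, MemLp (fun t => Φ t i) 2 (volume.restrict (Set.Ioo 0 T)))
    (hubar : Uad n T umin umax ubar)
    -- first order sign conditions for `(ū, Φ)`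
    (hsign : ∀ᵐ t ∂(volume.restrict (Set.Ioo 0 T)), ∀ i,
        (0 < Φ t i → ubar t i = umin t i) ∧ (Φ t i < 0 → ubar t i = umax t i))
    -- `v` is a critical direction (pointwise description of `C(ū)`)
    (v : ℝ → Fin n → ℝ) (hvmeas : Measurable v)
    (hvL2 : ∀ i, MemLp (fun t => v t i) 2 (volume.restrict (Set.Ioo 0 T)))
    (hvcrit : ∀ᵐ t ∂(volume.restrict (Set.Ioo 0 T)), ∀ i,
        (ubar t i = umin t i → 0 ≤ v t i) ∧
        (ubar t i = umax t i → v t i ≤ 0) ∧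
        (Φ t i ≠ 0 → v t i = 0)) :
    -- (i) `ū + k⁻² v_k ∈ U_ad`
    (∀ k : ℕ, 1 ≤ k →
      Uad n T umin umax
        (fun t i => ubar t i + ((k : ℝ) ^ 2)⁻¹ * trunc n umin umax ubar v k t i)) ∧
    -- (ii) `v_k → v` strongly in `L²(0,T;ℝⁿ)`
    Tendsto (fun k : ℕ =>
        ∫ t in Set.Ioo 0 T, ∑ i, (trunc n umin umax ubar v k t i - v t i) ^ 2)
      atTop (nhds 0) ∧
    -- (iii) `|v_{k,i}| ≤ |v_i|` a.e., and the orthogonality is inherited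
    (∀ k : ℕ, 1 ≤ k →
      (∀ᵐ t ∂(volume.restrict (Set.Ioo 0 T)),
          ∀ i, |trunc n umin umax ubar v k t i| ≤ |v t i|) ∧
      ((∑ i, ∫ t in Set.Ioo 0 T, |Φ t i * v t i|) = 0 →
        ∑ i, ∫ t in Set.Ioo 0 T, Φ t i * trunc n umin umax ubar v k t i = 0)) ∧
    -- in particular: `C(ū)` is the `L²`-closure of `D(ū)`
    (∀ v' : ℝ → Fin n → ℝ, Measurable v' →
      (∀ i, MemLp (fun t => v' t i) 2 (volume.restrict (Set.Ioo 0 T))) →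
      (critCone n T umin umax ubar Φ v' ↔ inClosureD n T umin umax ubar Φ v')) := by
  have htan : ∀ᵐ t ∂(volume.restrict (Set.Ioo 0 T)), ∀ i,
      v t i ∈ tangentConeIcc (umin t i) (umax t i) (ubar t i) :=
    hvcrit.mono fun t h i => ⟨(h i).1, (h i).2.1⟩
  refine ⟨fun k hk => uad_add_trunc hminmeas hmaxmeas hvmeas hubar htan hk,
    tendsto_integral_trunc_sub_sq hminmeas hmaxmeas hubar.1 hvmeas hvL2,
    fun k _ => ⟨ae_of_all _ fun t i => abs_trunc_le umin umax ubar v k t i, fun h => ?_⟩,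
    fun v' hv'meas hv'L2 =>
      ⟨fun h => h.inClosureD hminmeas hmaxmeas hminbdd hmaxbdd hubar hsign hΦL2 hv'meas hv'L2,
        fun h => h.critCone hminbdd hmaxbdd hubar hΦL2 hv'L2⟩⟩
  have hΦv := ae_eq_zero_of_sum_integral_eq_zero (f := fun i t => |Φ t i * v t i|)
    (fun i => ((hΦL2 i).integrable_mul (hvL2 i)).abs) (fun i => ae_of_all _ fun t => abs_nonneg _) h
  exact sum_integral_mul_trunc_eq_zero (hΦv.mono fun t ht i => abs_eq_zero.1 (ht i)) k

/-- properties of the truncations `v_k` of a critical direction `v`, and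
the identity `C(ū) = cl_{L²} D(ū)`. -/
theorem stmt_12 (n : ℕ) (T : ℝ) (hT : 0 < T)
    (umin umax : ℝ → Fin n → ℝ)
    (hminmeas : Measurable umin) (hmaxmeas : Measurable umax)
    (Cbound : ℝ)
    (hminbdd : ∀ᵐ t ∂(volume.restrict (Set.Ioo 0 T)), ∀ i, |umin t i| ≤ Cbound)
    (hmaxbdd : ∀ᵐ t ∂(volume.restrict (Set.Ioo 0 T)), ∀ i, |umax t i| ≤ Cbound)
    (hminmax : ∀ᵐ t ∂(volume.restrict (Set.Ioo 0 T)), ∀ i, umin t i ≤ umax t i)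
    (Φ ubar : ℝ → Fin n → ℝ)
    (hΦmeas : Measurable Φ)
    (hΦL2 : ∀ i, MemLp (fun t => Φ t i) 2 (volume.restrict (Set.Ioo 0 T)))
    (hubar : Uad n T umin umax ubar)
    -- first order sign conditions for `(ū, Φ)`
    (hsign : ∀ᵐ t ∂(volume.restrict (Set.Ioo 0 T)), ∀ i,
        (0 < Φ t i → ubar t i = umin t i) ∧ (Φ t i < 0 → ubar t i = umax t i))
    -- `v` is a critical direction (pointwise description of `C(ū)`)
    (v : ℝ → Fin n → ℝ) (hvmeas : Measurable v)
    (hvL2 : ∀ i, MemLp (fun t => v t i) 2 (volume.restrict (Set.Ioo 0 T)))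
    (hvcrit : ∀ᵐ t ∂(volume.restrict (Set.Ioo 0 T)), ∀ i,
        (ubar t i = umin t i → 0 ≤ v t i) ∧
        (ubar t i = umax t i → v t i ≤ 0) ∧
        (Φ t i ≠ 0 → v t i = 0)) :
    -- (i) `ū + k⁻² v_k ∈ U_ad`
    (∀ k : ℕ, 1 ≤ k →
      Uad n T umin umax
        (fun t i => ubar t i + ((k : ℝ) ^ 2)⁻¹ * trunc n umin umax ubar v k t i)) ∧
    -- (ii) `v_k → v` strongly in `L²(0,T;ℝⁿ)`
    Tendsto (fun k : ℕ =>
        ∫ t in Set.Ioo 0 T, ∑ i, (trunc n umin umax ubar v k t i - v t i) ^ 2)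
      atTop (nhds 0) ∧
    -- (iii) `|v_{k,i}| ≤ |v_i|` a.e., and the orthogonality is inherited
    (∀ k : ℕ, 1 ≤ k →
      (∀ᵐ t ∂(volume.restrict (Set.Ioo 0 T)),
          ∀ i, |trunc n umin umax ubar v k t i| ≤ |v t i|) ∧
      ((∑ i, ∫ t in Set.Ioo 0 T, |Φ t i * v t i|) = 0 →
        ∑ i, ∫ t in Set.Ioo 0 T, Φ t i * trunc n umin umax ubar v k t i = 0)) ∧
    -- in particular: `C(ū)` is the `L²`-closure of `D(ū)`
    (∀ v' : ℝ → Fin n → ℝ, Measurable v' →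
      (∀ i, MemLp (fun t => v' t i) 2 (volume.restrict (Set.Ioo 0 T))) →
      (critCone n T umin umax ubar Φ v' ↔ inClosureD n T umin umax ubar Φ v')) :=
  stmt_12_general n T umin umax hminmeas hmaxmeas Cbound hminbdd hmaxbdd Φ ubar hΦL2 hubar hsign v
    hvmeas hvL2 hvcrit
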